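/- Define A, B : ZMod 2 × ZMod 2 → ZMod 5 by A(1,1) = 1, A(1,0) = 3, A(0,1) = 4, A(0,0) = 1 and B(1,1) = 4, B(1,0) = 2, B(0,1) = 1, B(0,0) = 4. Then for all x, y, z ∈ ZMod 2 the three multiplicative biquandle bracket equations hold in ZMod 5: A(x,y)·A(y,z)·A(x+1, z+1) = A(x,z)·A(y+1, z+1)·A(x+1, y+1); A(x,y)·B(y,z)·B(x+1, z+1) = B(x,z)·B(y+1, z+1)·A(x+1, y+1); and B(x,y)·A(y,z)·B(x+1, z+1) = B(x,z)·A(y+1, z+1)·B(x+1, y+1). -/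
import Mathlib


/-- The biquandle bracket coefficient `A` from the paper's example. -/
def Acoef (x y : ZMod 2) : ZMod 5 :=
  if x = 1 then (if y = 1 then 1 else 3) else (if y = 1 then 4 else 1)

/-- The biquandle bracket coefficient `B` from the paper's example. -/
def Bcoef (x y : ZMod 2) : ZMod 5 :=
  if x = 1 then (if y = 1 then 4 else 2) else (if y = 1 then 1 else 4)

/-- The three multiplicative biquandle bracket (Reidemeister III) equations hold. -/
theorem biquandle_bracket_mult_eqs (x y z : ZMod 2) :
    Acoef x y * Acoef y z * Acoef (x + 1) (z + 1)
      = Acoef x z * Acoef (y + 1) (z + 1) * Acoef (x + 1) (y + 1) ∧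
    Acoef x y * Bcoef y z * Bcoef (x + 1) (z + 1)
      = Bcoef x z * Bcoef (y + 1) (z + 1) * Acoef (x + 1) (y + 1) ∧
    Bcoef x y * Acoef y z * Bcoef (x + 1) (z + 1)
      = Bcoef x z * Acoef (y + 1) (z + 1) * Bcoef (x + 1) (y + 1) := by
  revert x y z; decide
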